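/- Vertical stability of the strict tangent space: let D be a special polyhedra system, J ∈ Sing(D), and D' = Λ_J(D) its characteristic transform. Let J' ∈ H'_∞ be a singular stratum of D', written J' = (K∖J) ∪ A_{J'} ∪ {∞} with K = π_J^#(J') and A_{J'} ⊊ J. Then T(Δ_K) ⊆ A_{J'} ⊊ J, and moreover T(Δ_K) ⊆ T(Δ'_{J'}) ⊆ J'. -/

import Mathlib

open scoped Pointwise

namespace RedSing

/-! ### Vectors and polyhedra.
A vector "in `ℝ^J`" is a function `ℕ → ℝ` supported on the finite set `J`. -/

abbrev Vec : Type := ℕ → ℝ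

/-- The cone `ℝ_{≥0}^J` of nonnegative vectors supported on `J`. -/
def suppCone (J : Finset ℕ) : Set Vec :=
  {σ | (∀ j, 0 ≤ σ j) ∧ ∀ j, j ∉ J → σ j = 0}

/-- Positive convex hull `[[A]] = convexHull (A + ℝ_{≥0}^J)`. -/
noncomputable def posHull (J : Finset ℕ) (A : Set Vec) : Set Vec :=
  convexHull ℝ (A + suppCone J)

/-- The lattice points `(1/d)·ℤ_{≥0}^J`. -/
def latticePts (J : Finset ℕ) (d : ℕ) : Set Vec :=
  {σ | σ ∈ suppCone J ∧ ∀ j, ∃ m : ℕ, σ j = (m : ℝ) / (d : ℝ)}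

/-- `Δ ⊆ ℝ_{≥0}^J` is a characteristic polyhedron with denominator `d`. -/
def IsCharPoly (J : Finset ℕ) (d : ℕ) (Δ : Set Vec) : Prop :=
  ∃ A, A ⊆ latticePts J d ∧ Δ = posHull J A

/-! ### Support fabrics -/

/-- A support fabric: a nonempty finite index set `I` together with a
downward-closed family `H` of subsets of `I` (the strata). -/
structure Fabric where
  I : Finset ℕ
  I_nonempty : I.Nonempty
  H : Set (Finset ℕ)
  mem_sub : ∀ J ∈ H, J ⊆ I
  downward : ∀ J ∈ H, ∀ J' ⊆ J, J' ∈ H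

/-- Dimension of a support fabric: the maximal cardinality of a stratum. -/
noncomputable def Fabric.dim (F : Fabric) : ℕ :=
  sSup {n | ∃ J ∈ F.H, J.card = n}

/-- The Zariski topology on finsets: the open sets are the downward-closed families;
subsets such as the strata set `H` carry the subspace topology. -/
instance zariskiTopology : TopologicalSpace (Finset ℕ) where
  IsOpen U := ∀ J ∈ U, ∀ J' ⊆ J, J' ∈ U
  isOpen_univ := fun J _ J' _ => Set.mem_univ J'
  isOpen_inter := fun s t hs ht J hJ J' hJ' => ⟨hs J hJ.1 J' hJ', ht J hJ.2 J' hJ'⟩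
  isOpen_sUnion := fun S hS J hJ J' hJ' => by
    obtain ⟨t, htS, hJt⟩ := hJ
    exact ⟨t, htS, hS t htS J hJt J' hJ'⟩

/-! ### Polyhedra systems -/

/-- A polyhedra system over a support fabric: a nonempty characteristic polyhedron
with denominator `d` for each stratum, compatible with the projections
(restriction of functions). -/
structure PolySys where
  F : Fabric
  d : ℕ
  d_pos : 0 < d
  Δ : Finset ℕ → Set Vec
  char : ∀ J ∈ F.H, IsCharPoly J d (Δ J)
  nonempty : ∀ J ∈ F.H, (Δ J).Nonempty
  compat : ∀ J₁ ∈ F.H, ∀ J₂ ∈ F.H, J₁ ⊆ J₂ →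
    Δ J₁ = (fun σ => fun j => if j ∈ J₁ then σ j else 0) '' Δ J₂

/-- Contact exponent `δ(Δ) = min {|σ| : σ ∈ Δ}` (with the convention `δ = -1`
for the empty index set). -/
noncomputable def contactExp (J : Finset ℕ) (Δ : Set Vec) : ℝ :=
  if J = (∅ : Finset ℕ) then -1 else sInf ((fun σ => ∑ j ∈ J, σ j) '' Δ)

/-- Singular locus: strata with contact exponent at least 1. -/
def Sing (D : PolySys) : Set (Finset ℕ) :=
  {J | J ∈ D.F.H ∧ 1 ≤ contactExp J (D.Δ J)}

/-- `D` is special: `δ(D) = max {δ(Δ_J)} = 1`. -/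
def IsSpecial (D : PolySys) : Prop :=
  (∀ J ∈ D.F.H, contactExp J (D.Δ J) ≤ 1) ∧ ∃ J ∈ D.F.H, contactExp J (D.Δ J) = 1

/-! ### Blow-ups and transforms -/

/-- The strata of the blow-up centered in `J`, with new index `inf` (playing `∞`). -/
def blowupH (H : Set (Finset ℕ)) (J : Finset ℕ) (inf : ℕ) : Set (Finset ℕ) :=
  {K | K ∈ H ∧ ¬ J ⊆ K} ∪
    {J' | ∃ K, (K ∈ H ∧ J ⊆ K) ∧ ∃ A, A ⊂ J ∧ J' = (K \ J) ∪ A ∪ {inf}}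

/-- The map `π_J^#` from the strata of the blow-up to the strata of `F`. -/
def blowdown (J : Finset ℕ) (inf : ℕ) (J' : Finset ℕ) : Finset ℕ :=
  if inf ∈ J' then (J'.erase inf) ∪ J else J'

/-- The map `λ_{J'} : ℝ^K → ℝ^{J'}`. -/
noncomputable def lamMap (J J' : Finset ℕ) (inf : ℕ) (σ : Vec) : Vec :=
  fun j => if j = inf then ∑ i ∈ J, σ i else if j ∈ J' then σ j else 0

/-- The indicator vector `e_{J',∞}` of the new index. -/
def eVec (inf : ℕ) : Vec := fun j => if j = inf then 1 else 0

/-- The polyhedron `Δ⁰_{J'}` of the total transform at a stratum `J'` of the blow-up. -/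
noncomputable def totalΔ (D : PolySys) (J : Finset ℕ) (inf : ℕ) (J' : Finset ℕ) : Set Vec :=
  if inf ∈ J' then posHull J' (lamMap J J' inf '' D.Δ (blowdown J inf J'))
  else D.Δ J'

/-- The polyhedron `Δ'_{J'} = Δ⁰_{J'} - e_{J',∞}` of the characteristic transform
(`e_{J',∞} = 0` when `∞ ∉ J'`). -/
noncomputable def charΔ (D : PolySys) (J : Finset ℕ) (inf : ℕ) (J' : Finset ℕ) : Set Vec :=
  if inf ∈ J' then
    (fun σ => σ - eVec inf) '' posHull J' (lamMap J J' inf '' D.Δ (blowdown J inf J'))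
  else D.Δ J'

/-- `D'` is the total transform `Λ⁰_J(D)` of `D` centered in the nonempty stratum `J`,
with new index `inf`. -/
def IsTotalTransformAt (D D' : PolySys) (J : Finset ℕ) (inf : ℕ) : Prop :=
  J ∈ D.F.H ∧ J ≠ ∅ ∧ D'.d = D.d ∧ inf ∉ D.F.I ∧
  D'.F.I = insert inf D.F.I ∧ D'.F.H = blowupH D.F.H J inf ∧
  ∀ J' ∈ D'.F.H, D'.Δ J' = totalΔ D J inf J'

/-- `D'` is a total transform of `D` centered in `J`. -/
def IsTotalTransform (D D' : PolySys) (J : Finset ℕ) : Prop :=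
  ∃ inf, IsTotalTransformAt D D' J inf

/-- `D'` is the characteristic transform `Λ_J(D)` of `D` centered in the singular
stratum `J`, with new index `inf`. -/
def IsCharTransformAt (D D' : PolySys) (J : Finset ℕ) (inf : ℕ) : Prop :=
  J ∈ Sing D ∧ D'.d = D.d ∧ inf ∉ D.F.I ∧
  D'.F.I = insert inf D.F.I ∧ D'.F.H = blowupH D.F.H J inf ∧
  ∀ J' ∈ D'.F.H, D'.Δ J' = charΔ D J inf J'

/-- `D'` is a characteristic transform of `D` centered in `J`. -/
def IsCharTransform (D D' : PolySys) (J : Finset ℕ) : Prop :=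
  ∃ inf, IsCharTransformAt D D' J inf

/-- A reduction of singularities of `D`: a finite sequence of characteristic
transforms, each centered in a singular stratum of the previous system, ending
in a system with empty singular locus. -/
def HasReduction (D : PolySys) : Prop :=
  ∃ (k : ℕ) (seq : ℕ → PolySys), seq 0 = D ∧
    (∀ i, i < k → ∃ J, IsCharTransform (seq i) (seq (i + 1)) J) ∧
    Sing (seq k) = ∅

/-! ### Strict tangent space and maximal contact -/

/-- Hironaka's strict tangent space `T(Δ)` of a polyhedron `Δ ⊆ ℝ_{≥0}^J`. -/
def strictTangent (J : Finset ℕ) (Δ : Set Vec) : Set ℕ :=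
  {j | ∃ σ ∈ Δ, (∑ i ∈ J, σ i) = 1 ∧ σ j ≠ 0}

/-- The stratum `T` has maximal contact with the (special) system `D`. -/
def HasMaximalContact (D : PolySys) (T : Finset ℕ) : Prop :=
  T ∈ D.F.H ∧ ∀ J ∈ Sing D, (↑T : Set ℕ) ⊆ strictTangent J (D.Δ J)

/-! ### Hironaka's projection from a stratum `T` -/

/-- Hironaka's projection `∇_J^T(σ) = σ|_{J∖T} / (1 - Σ_{j∈T} σ(j))`. -/
noncomputable def hironakaProj (T J : Finset ℕ) (σ : Vec) : Vec :=
  fun j => if j ∈ J \ T then σ j / (1 - ∑ i ∈ T, σ i) else 0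

/-- The polyhedron `Δ^T_{J*} = ∇_J^T(Δ_J ∩ M_J^T)` of Hironaka's projection,
where `J = J* ∪ T`. -/
noncomputable def projΔ (D : PolySys) (T J' : Finset ℕ) : Set Vec :=
  hironakaProj T (J' ∪ T) '' {σ | σ ∈ D.Δ (J' ∪ T) ∧ (∑ i ∈ T, σ i) < 1}

/-- The strata `H^T = {J ∖ T : T ⊆ J ∈ H}` of the projected fabric `F^T`. -/
def projH (F : Fabric) (T : Finset ℕ) : Set (Finset ℕ) :=
  {J' | ∃ J, (J ∈ F.H ∧ T ⊆ J) ∧ J' = J \ T}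

/-- The singular locus of Hironaka's projection `D^T`. -/
def projSing (D : PolySys) (T : Finset ℕ) : Set (Finset ℕ) :=
  {J' | J' ∈ projH D.F T ∧ (projΔ D T J').Nonempty ∧ 1 ≤ contactExp J' (projΔ D T J')}

/-- `E` is Hironaka's projection `D^T` of `D` from the stratum `T`
(a polyhedra system over `F^T` with denominator `d!·d`). -/
def IsHironakaProjection (D E : PolySys) (T : Finset ℕ) : Prop :=
  E.F.I = D.F.I \ T ∧ E.F.H = projH D.F T ∧ E.d = Nat.factorial D.d * D.d ∧
  ∀ J' ∈ E.F.H, E.Δ J' = projΔ D T J'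

/-! ### Reduction `Red_C` of a system to a closed set `C` of strata -/

/-- The fabric `Red_C(F)`, with strata `H_C = ⋃_{J ∈ C} P(J)`. -/
def Fabric.red (F : Fabric) (C : Set (Finset ℕ)) : Fabric where
  I := F.I
  I_nonempty := F.I_nonempty
  H := {J' | ∃ J, (J ∈ C ∧ J ∈ F.H) ∧ J' ⊆ J}
  mem_sub := by
    rintro J' ⟨J, ⟨_, hJH⟩, hsub⟩
    exact hsub.trans (F.mem_sub J hJH)
  downward := by
    rintro J' ⟨J, hJ, hsub⟩ J'' hsub'
    exact ⟨J, hJ, hsub'.trans hsub⟩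

/-- The reduction `Red_C(D)` of a polyhedra system to a closed set `C ⊆ H`. -/
noncomputable def PolySys.red (D : PolySys) (C : Set (Finset ℕ)) : PolySys where
  F := D.F.red C
  d := D.d
  d_pos := D.d_pos
  Δ := D.Δ
  char := by
    rintro J ⟨K, ⟨_, hK⟩, hsub⟩
    exact D.char J (D.F.downward K hK J hsub)
  nonempty := by
    rintro J ⟨K, ⟨_, hK⟩, hsub⟩
    exact D.nonempty J (D.F.downward K hK J hsub)
  compat := by
    rintro J₁ ⟨K₁, ⟨_, hK₁⟩, h₁⟩ J₂ ⟨K₂, ⟨_, hK₂⟩, h₂⟩ h12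
    exact D.compat J₁ (D.F.downward K₁ hK₁ J₁ h₁) J₂ (D.F.downward K₂ hK₂ J₂ h₂) h12

/-- A special polyhedra system is consistent if for each connected component `C`
of its singular locus there is a stratum having maximal contact with `Red_C(D)`
(non-singular systems are consistent by convention). -/
def IsConsistent (D : PolySys) : Prop :=
  ∀ x ∈ Sing D, ∃ T, HasMaximalContact (D.red (connectedComponentIn (Sing D) x)) T

/-! ### Fitting and Spivakovsky's invariant -/

/-- The fitting vector `w_Δ(j) = min {σ(j) : σ ∈ Δ}`. -/
noncomputable def fitVec (Δ : Set Vec) : Vec := fun j => sInf ((fun σ => σ j) '' Δ)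

/-- The fitting `Δ̃ = Δ - w_Δ`. -/
noncomputable def fitting (Δ : Set Vec) : Set Vec := (fun σ => σ - fitVec Δ) '' Δ

/-- Spivakovsky's invariant `Spi_D = max {δ(Δ̃_J) : J ∈ Sing(D)}`. -/
noncomputable def spi (D : PolySys) : ℝ :=
  sSup {x | ∃ J ∈ Sing D, contactExp J (fitting (D.Δ J)) = x}

/-- `S(D) = {J ∈ Sing(D) : δ(Δ̃_J) = Spi_D}`. -/
def SSet (D : PolySys) : Set (Finset ℕ) :=
  {J | J ∈ Sing D ∧ contactExp J (fitting (D.Δ J)) = spi D}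

/-! ### Moderated transforms, normal crossings, quasi-ordinary systems -/

/-- The polyhedron of the `d`-moderated transform `Θ^d_J(N) = N(Λ_J(N/d))`
at a stratum `J'` of the blow-up. -/
noncomputable def modΔ (N : PolySys) (d : ℕ) (J : Finset ℕ) (inf : ℕ) (J' : Finset ℕ) :
    Set Vec :=
  if inf ∈ J' then
    (fun σ => σ - (d : ℝ) • eVec inf) ''
      posHull J' (lamMap J J' inf '' N.Δ (blowdown J inf J'))
  else N.Δ J'

/-- `N'` is the `d`-moderated transform `Θ^d_J(N)` of the Newton polyhedra system `N`
centered in a stratum `J` with `δ(N_J) ≥ d`, with new index `inf`. -/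
def IsModTransformAt (N N' : PolySys) (d : ℕ) (J : Finset ℕ) (inf : ℕ) : Prop :=
  N.d = 1 ∧ N'.d = 1 ∧ J ∈ N.F.H ∧ (d : ℝ) ≤ contactExp J (N.Δ J) ∧ inf ∉ N.F.I ∧
  N'.F.I = insert inf N.F.I ∧ N'.F.H = blowupH N.F.H J inf ∧
  ∀ J' ∈ N'.F.H, N'.Δ J' = modΔ N d J inf J'

/-- `N'` is a `d`-moderated transform of `N` centered in `J`. -/
def IsModTransform (N N' : PolySys) (d : ℕ) (J : Finset ℕ) : Prop :=
  ∃ inf, IsModTransformAt N N' d J inf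

/-- A Newton polyhedra system has normal crossings if each polyhedron has a
single vertex. -/
def HasNormalCrossings (D : PolySys) : Prop :=
  ∀ J ∈ D.F.H, ∃ σ, D.Δ J = posHull J {σ}

/-- `D` is Hironaka quasi-ordinary: each polyhedron over a singular stratum has a
single vertex. -/
def IsQuasiOrdinary (D : PolySys) : Prop :=
  ∀ J ∈ Sing D, ∃ σ, D.Δ J = posHull J {σ}

/-! ### Lexicographic order on sequences of naturals -/

/-- Strict lexicographic order on sequences `ℕ → ℕ`. -/
def LexLt (φ ψ : ℕ → ℕ) : Prop := ∃ n, φ n < ψ n ∧ ∀ m < n, φ m = ψ m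

/-- A weakly decreasing sequence of naturals. -/
def WeaklyDecr (φ : ℕ → ℕ) : Prop := ∀ n, φ (n + 1) ≤ φ n

/-! Let `K = π_J^#(J')` and `σ ∈ Δ_K` with `|σ| = 1`. The point `λ_{J'}(σ) - e_{J',∞}` lies in
`Δ'_{J'}`, so singularity of `J'` gives `Σ_J σ + Σ_{J'∖{∞}} σ = |λ_{J'}(σ)| ≥ 2`. As `J` and
`J' ∖ {∞}` are contained in `K`, both sums are at most `|σ| = 1`, hence both equal `1`: the support
of `σ` lies in `J ∩ J'`, and `λ_{J'}(σ) - e_{J',∞}` is a point of degree one of `Δ'_{J'}` that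
agrees with `σ` on `J' ∖ {∞}`. -/

lemma zero_mem_suppCone (J : Finset ℕ) : (0 : Vec) ∈ suppCone J :=
  ⟨fun _ => le_rfl, fun _ _ => rfl⟩

lemma convex_suppCone (J : Finset ℕ) : Convex ℝ (suppCone J) := by
  intro x hx y hy a b ha hb _
  refine ⟨fun j => ?_, fun j hj => ?_⟩
  · simpa using add_nonneg (mul_nonneg ha (hx.1 j)) (mul_nonneg hb (hy.1 j))
  · simp [hx.2 j hj, hy.2 j hj]

lemma add_mem_suppCone {J : Finset ℕ} {σ τ : Vec} (hσ : σ ∈ suppCone J)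
    (hτ : τ ∈ suppCone J) : σ + τ ∈ suppCone J :=
  ⟨fun j => add_nonneg (hσ.1 j) (hτ.1 j), fun j hj => by simp [hσ.2 j hj, hτ.2 j hj]⟩

lemma posHull_subset_suppCone {J : Finset ℕ} {A : Set Vec} (h : A ⊆ suppCone J) :
    posHull J A ⊆ suppCone J := by
  refine convexHull_min ?_ (convex_suppCone J)
  rintro _ ⟨x, hx, y, hy, rfl⟩
  exact add_mem_suppCone (h hx) hy

lemma subset_posHull (J : Finset ℕ) (A : Set Vec) : A ⊆ posHull J A := fun x hx =>
  subset_convexHull ℝ _ ⟨x, hx, 0, zero_mem_suppCone J, add_zero x⟩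

lemma PolySys.Δ_subset_suppCone (D : PolySys) {J : Finset ℕ} (hJ : J ∈ D.F.H) :
    D.Δ J ⊆ suppCone J := by
  obtain ⟨A, hA, hΔ⟩ := D.char J hJ
  rw [hΔ]
  exact posHull_subset_suppCone fun σ hσ => (hA hσ).1

lemma PolySys.strictTangent_subset (D : PolySys) {J : Finset ℕ} (hJ : J ∈ D.F.H) :
    strictTangent J (D.Δ J) ⊆ J := by
  rintro j ⟨σ, hσ, -, hσj⟩
  by_contra hj
  exact hσj ((D.Δ_subset_suppCone hJ hσ).2 j hj)

lemma one_le_sum_of_one_le_contactExp {J : Finset ℕ} {Δ : Set Vec} {σ : Vec}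
    (h : 1 ≤ contactExp J Δ) (hσ : σ ∈ Δ) : 1 ≤ ∑ j ∈ J, σ j := by
  have hJ : J ≠ ∅ := by
    rintro rfl
    simp [contactExp] at h
    linarith
  rw [contactExp, if_neg hJ] at h
  -- an unbounded set of reals has `sInf = 0`, so `1 ≤ sInf` forces boundedness
  have hbdd : BddBelow ((fun σ => ∑ j ∈ J, σ j) '' Δ) := by
    by_contra hb
    rw [Real.sInf_of_not_bddBelow hb] at h
    linarith
  exact h.trans (csInf_le hbdd ⟨σ, hσ, rfl⟩)

lemma sum_sub_eVec {J : Finset ℕ} {inf : ℕ} (hinf : inf ∈ J) (ρ : Vec) :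
    ∑ j ∈ J, (ρ - eVec inf) j = ∑ j ∈ J, ρ j - 1 := by
  simp [Finset.sum_sub_distrib, eVec, hinf]

lemma sum_lamMap {J J' : Finset ℕ} {inf : ℕ} (hinf : inf ∈ J') (σ : Vec) :
    ∑ j ∈ J', lamMap J J' inf σ j = ∑ i ∈ J, σ i + ∑ j ∈ J'.erase inf, σ j := by
  rw [← Finset.add_sum_erase J' _ hinf]
  congr 1
  · simp [lamMap]
  · refine Finset.sum_congr rfl fun j hj => ?_
    obtain ⟨hjne, hj⟩ := Finset.mem_erase.mp hj
    simp [lamMap, hjne, hj]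

lemma mem_of_sum_eq_sum {K L : Finset ℕ} {σ : Vec} (hσ : σ ∈ suppCone K) (hLK : L ⊆ K)
    (hsum : ∑ i ∈ L, σ i = ∑ i ∈ K, σ i) {j : ℕ} (hj : σ j ≠ 0) : j ∈ L := by
  have hjK : j ∈ K := by
    by_contra hjK
    exact hj (hσ.2 j hjK)
  have hKL : ∑ i ∈ K \ L, σ i = 0 := by
    rw [Finset.sum_sdiff_eq_sub hLK, hsum, sub_self]
  by_contra hjL
  exact hj ((Finset.sum_eq_zero_iff_of_nonneg fun i _ => hσ.1 i).mp hKL j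
    (Finset.mem_sdiff.mpr ⟨hjK, hjL⟩))

section Blowup

variable {J J' : Finset ℕ} {inf : ℕ}

lemma blowdown_of_mem (hinf : inf ∈ J') : blowdown J inf J' = J'.erase inf ∪ J :=
  if_pos hinf

lemma blowdown_mem_of_mem_blowupH {F : Fabric} (hinfI : inf ∉ F.I)
    (hJ' : J' ∈ blowupH F.H J inf) : blowdown J inf J' ∈ F.H := by
  rcases hJ' with ⟨hJ'H, -⟩ | ⟨K, ⟨hKH, hJK⟩, A, hAJ, rfl⟩
  · rwa [blowdown, if_neg fun hinf => hinfI (F.mem_sub _ hJ'H hinf)]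
  · have hinfK : inf ∉ K := fun hinf => hinfI (F.mem_sub _ hKH hinf)
    have hAsubJ := hAJ.subset
    convert hKH using 1
    rw [blowdown_of_mem (by simp)]
    grind

lemma inter_ssubset_of_mem_blowupH {F : Fabric} (hinfI : inf ∉ F.I)
    (hJ' : J' ∈ blowupH F.H J inf) (hinf : inf ∈ J') : J' ∩ J ⊂ J := by
  rcases hJ' with ⟨hJ'H, -⟩ | ⟨K, ⟨hKH, hJK⟩, A, hAJ, rfl⟩
  · exact absurd (F.mem_sub _ hJ'H hinf) hinfI
  · have hinfJ : inf ∉ J := fun hinf => hinfI (F.mem_sub _ hKH (hJK hinf))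
    convert hAJ using 1
    have hAsubJ := hAJ.subset
    grind

end Blowup

namespace IsCharTransformAt

variable {D D' : PolySys} {J J' : Finset ℕ} {inf : ℕ}

lemma blowdown_mem (h : IsCharTransformAt D D' J inf) (hJ' : J' ∈ D'.F.H) :
    blowdown J inf J' ∈ D.F.H :=
  blowdown_mem_of_mem_blowupH h.2.2.1 (h.2.2.2.2.1 ▸ hJ')

lemma lamMap_sub_eVec_mem (h : IsCharTransformAt D D' J inf) (hJ' : J' ∈ D'.F.H)
    (hinf : inf ∈ J') {σ : Vec} (hσ : σ ∈ D.Δ (blowdown J inf J')) :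
    lamMap J J' inf σ - eVec inf ∈ D'.Δ J' := by
  rw [h.2.2.2.2.2 J' hJ', charΔ, if_pos hinf]
  exact ⟨_, subset_posHull _ _ ⟨σ, hσ, rfl⟩, rfl⟩

lemma two_le_sum_lamMap (h : IsCharTransformAt D D' J inf) (hsing : J' ∈ Sing D')
    (hinf : inf ∈ J') {σ : Vec} (hσ : σ ∈ D.Δ (blowdown J inf J')) :
    2 ≤ ∑ j ∈ J', lamMap J J' inf σ j := by
  have h1 := one_le_sum_of_one_le_contactExp hsing.2 (h.lamMap_sub_eVec_mem hsing.1 hinf hσ)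
  rw [sum_sub_eVec hinf] at h1
  linarith

lemma sum_eq_one_of_sum_blowdown_eq_one (h : IsCharTransformAt D D' J inf)
    (hsing : J' ∈ Sing D') (hinf : inf ∈ J') {σ : Vec}
    (hσ : σ ∈ D.Δ (blowdown J inf J')) (hσ1 : ∑ i ∈ blowdown J inf J', σ i = 1) :
    ∑ i ∈ J, σ i = 1 ∧ ∑ i ∈ J'.erase inf, σ i = 1 := by
  have hσK := D.Δ_subset_suppCone (h.blowdown_mem hsing.1) hσ
  have hle : ∀ {L : Finset ℕ}, L ⊆ blowdown J inf J' → ∑ i ∈ L, σ i ≤ 1 := fun hL =>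
    hσ1 ▸ Finset.sum_le_sum_of_subset_of_nonneg hL fun i _ _ => hσK.1 i
  have hJ := hle (blowdown_of_mem (J := J) hinf ▸ Finset.subset_union_right)
  have hJ' := hle (blowdown_of_mem (J := J) hinf ▸ Finset.subset_union_left)
  have h2 := h.two_le_sum_lamMap hsing hinf hσ
  rw [sum_lamMap hinf] at h2
  constructor <;> linarith

lemma mem_erase_inter_of_ne_zero (h : IsCharTransformAt D D' J inf) (hsing : J' ∈ Sing D')
    (hinf : inf ∈ J') {σ : Vec} (hσ : σ ∈ D.Δ (blowdown J inf J'))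
    (hσ1 : ∑ i ∈ blowdown J inf J', σ i = 1) {j : ℕ} (hj : σ j ≠ 0) : j ∈ J'.erase inf ∩ J := by
  obtain ⟨hJ1, hJ'1⟩ := h.sum_eq_one_of_sum_blowdown_eq_one hsing hinf hσ hσ1
  have hσK := D.Δ_subset_suppCone (h.blowdown_mem hsing.1) hσ
  rw [blowdown_of_mem hinf] at hσK hσ1
  exact Finset.mem_inter.mpr
    ⟨mem_of_sum_eq_sum hσK Finset.subset_union_left (hJ'1.trans hσ1.symm) hj,
      mem_of_sum_eq_sum hσK Finset.subset_union_right (hJ1.trans hσ1.symm) hj⟩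

end IsCharTransformAt

theorem vertical_stability_general (D D' : PolySys) (J : Finset ℕ)
    (inf : ℕ) (h : IsCharTransformAt D D' J inf) (J' : Finset ℕ)
    (hinf : inf ∈ J') (hsing : J' ∈ Sing D') :
    strictTangent (blowdown J inf J') (D.Δ (blowdown J inf J')) ⊆ (↑(J' ∩ J) : Set ℕ) ∧
      J' ∩ J ⊂ J ∧
      strictTangent (blowdown J inf J') (D.Δ (blowdown J inf J')) ⊆
        strictTangent J' (D'.Δ J') ∧
      strictTangent J' (D'.Δ J') ⊆ (↑J' : Set ℕ) := by
  refine ⟨?_, inter_ssubset_of_mem_blowupH h.2.2.1 (h.2.2.2.2.1 ▸ hsing.1) hinf, ?_,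
    D'.strictTangent_subset hsing.1⟩
  · rintro j ⟨σ, hσ, hσ1, hj⟩
    have hj' := h.mem_erase_inter_of_ne_zero hsing hinf hσ hσ1 hj
    exact Finset.inter_subset_inter_right (Finset.erase_subset inf J') hj'
  · rintro j ⟨σ, hσ, hσ1, hj⟩
    obtain ⟨hJ1, hJ'1⟩ := h.sum_eq_one_of_sum_blowdown_eq_one hsing hinf hσ hσ1
    obtain ⟨hjne, hjJ'⟩ := Finset.mem_erase.mp
      (Finset.mem_inter.mp (h.mem_erase_inter_of_ne_zero hsing hinf hσ hσ1 hj)).1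
    refine ⟨_, h.lamMap_sub_eVec_mem hsing.1 hinf hσ, ?_, ?_⟩
    · rw [sum_sub_eVec hinf, sum_lamMap hinf, hJ1, hJ'1]
      norm_num
    · simpa [lamMap, eVec, hjne, hjJ'] using hj

/-- Vertical stability of the strict tangent space: for a singular stratum
`J' = (K∖J) ∪ A_{J'} ∪ {∞}` (so `A_{J'} = J' ∩ J`) of the characteristic transform
of a special system, `T(Δ_K) ⊆ A_{J'} ⊊ J` and `T(Δ_K) ⊆ T(Δ'_{J'}) ⊆ J'`. -/
theorem vertical_stability (D D' : PolySys) (hsp : IsSpecial D) (J : Finset ℕ)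
    (inf : ℕ) (h : IsCharTransformAt D D' J inf) (J' : Finset ℕ)
    (hJ' : J' ∈ D'.F.H) (hinf : inf ∈ J') (hsing : J' ∈ Sing D') :
    strictTangent (blowdown J inf J') (D.Δ (blowdown J inf J')) ⊆ (↑(J' ∩ J) : Set ℕ) ∧
      J' ∩ J ⊂ J ∧
      strictTangent (blowdown J inf J') (D.Δ (blowdown J inf J')) ⊆
        strictTangent J' (D'.Δ J') ∧
      strictTangent J' (D'.Δ J') ⊆ (↑J' : Set ℕ) :=
  vertical_stability_general D D' J inf h J' hinf hsing

end RedSing
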